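/- arXiv:1512.00503 — 3 statements merged into one kernel-verified Lean document; each statement's English description precedes it below -/
import Mathlib

section
/- Let K be a submultiplicative model kernel and let μ₀ be a finite nonnegative measure on [0,∞) with ⟨φ, μ₀⟩ < ∞, where φ(ω) = ω + 1. Then any strong local solution (μ_t)_{t<T} of the weak isotropic 4-wave kinetic equation starting from μ₀ is conservative: the total energy ∫₀^∞ ω μ_t(dω) is finite and constant in t on [0,T). -/
open MeasureTheory Set Classical

noncomputable section

/-- `phi ω = ω + 1`. -/
def phi (ω : ℝ) : ℝ := ω + 1

/-- The collision domain `D = {(ω₁,ω₂,ω₃) ∈ [0,∞)³ : ω₁ + ω₂ ≥ ω₃}`. -/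
def Ddom : Set (ℝ × ℝ × ℝ) :=
  {p | 0 ≤ p.1 ∧ 0 ≤ p.2.1 ∧ 0 ≤ p.2.2 ∧ p.2.2 ≤ p.1 + p.2.1}

/-- A model kernel: nonnegative and continuous on `[0,∞)³`, homogeneous of some
degree `λ ≥ 0`, and symmetric in its first two arguments. -/
structure IsModelKernel (K : ℝ → ℝ → ℝ → ℝ) : Prop where
  nonneg : ∀ ω₁ ω₂ ω₃ : ℝ, 0 ≤ ω₁ → 0 ≤ ω₂ → 0 ≤ ω₃ → 0 ≤ K ω₁ ω₂ ω₃
  cont : ContinuousOn (fun p : ℝ × ℝ × ℝ => K p.1 p.2.1 p.2.2)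
    {p : ℝ × ℝ × ℝ | 0 ≤ p.1 ∧ 0 ≤ p.2.1 ∧ 0 ≤ p.2.2}
  homog : ∃ lam : ℝ, 0 ≤ lam ∧ ∀ ξ ω₁ ω₂ ω₃ : ℝ, 0 < ξ → 0 ≤ ω₁ → 0 ≤ ω₂ → 0 ≤ ω₃ →
    K (ξ * ω₁) (ξ * ω₂) (ξ * ω₃) = ξ ^ lam * K ω₁ ω₂ ω₃
  symm : ∀ ω₁ ω₂ ω₃ : ℝ, K ω₁ ω₂ ω₃ = K ω₂ ω₁ ω₃

/-- `K` is submultiplicative: `K(ω₁,ω₂,ω₃) ≤ φ(ω₁)φ(ω₂)φ(ω₃)` on `[0,∞)³`. -/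
def IsSubmultiplicative (K : ℝ → ℝ → ℝ → ℝ) : Prop :=
  ∀ ω₁ ω₂ ω₃ : ℝ, 0 ≤ ω₁ → 0 ≤ ω₂ → 0 ≤ ω₃ →
    K ω₁ ω₂ ω₃ ≤ phi ω₁ * phi ω₂ * phi ω₃

/-- Integrand of the weak collision operator (with the indicator of `D` built in). -/
def collisionIntegrand (K : ℝ → ℝ → ℝ → ℝ) (f : ℝ → ℝ) (p : ℝ × ℝ × ℝ) : ℝ :=
  if p ∈ Ddom then
    (f (p.1 + p.2.1 - p.2.2) + f p.2.2 - f p.2.1 - f p.1) * K p.1 p.2.1 p.2.2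
  else 0

/-- `⟨f, Q(μ)⟩`. -/
def Qpair (K : ℝ → ℝ → ℝ → ℝ) (μ : Measure ℝ) (f : ℝ → ℝ) : ℝ :=
  (1 / 2) * ∫ p, collisionIntegrand K f p ∂(μ.prod (μ.prod μ))

/-- Test functions: bounded measurable with bounded support. -/
def TestFun (f : ℝ → ℝ) : Prop :=
  Measurable f ∧ (∃ C, ∀ ω, |f ω| ≤ C) ∧ ∃ R, ∀ ω, R < |ω| → f ω = 0

/-- A local solution on `[0,T)` of the weak isotropic 4-wave kinetic equation,
starting from `μ₀`. -/
structure IsLocalSolution (K : ℝ → ℝ → ℝ → ℝ) (μ₀ : Measure ℝ) (T : ℝ)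
    (μ : ℝ → Measure ℝ) : Prop where
  finite : ∀ t, 0 ≤ t → t < T → IsFiniteMeasure (μ t)
  supp : ∀ t, 0 ≤ t → t < T → μ t (Set.Iio 0) = 0
  eqn : ∀ f : ℝ → ℝ, TestFun f → ∀ t, 0 ≤ t → t < T →
    ∫ ω, f ω ∂(μ t) = ∫ ω, f ω ∂μ₀ + ∫ s in Set.Ioc (0 : ℝ) t, Qpair K (μ s) f
  energy : ∀ t, 0 ≤ t → t < T →
    ∫⁻ ω, ENNReal.ofReal ω ∂(μ t) ≤ ∫⁻ ω, ENNReal.ofReal ω ∂μ₀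

/-- A strong local solution: `∫₀ᵗ ⟨φ², μ_s⟩ ds < ∞` for all `t < T`. -/
def IsStrongSolution (K : ℝ → ℝ → ℝ → ℝ) (μ₀ : Measure ℝ) (T : ℝ)
    (μ : ℝ → Measure ℝ) : Prop :=
  IsLocalSolution K μ₀ T μ ∧ ∀ t, 0 ≤ t → t < T →
    ∫⁻ s in Set.Ioc (0 : ℝ) t, ∫⁻ ω, ENNReal.ofReal (phi ω ^ 2) ∂(μ s) < ⊤

/-!
Test the equation against the truncated energies `f_n = ω 1_{[0,2n]}`. Since `ω` is a collision
invariant, the bracket `f_n(ω₁+ω₂-ω₃) + f_n(ω₃) - f_n(ω₂) - f_n(ω₁)` vanishes unless some `ωᵢ`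
exceeds `n`, and together with `K ≤ φ ⊗ φ ⊗ φ` this gives
`|⟨f_n, Q(μ_s)⟩| ≤ 9 ⟨φ² 1_{(n,∞)}, μ_s⟩ ⟨φ, μ_s⟩²`. For a strong solution the time integral of
the tail `⟨φ² 1_{(n,∞)}, μ_s⟩` tends to `0` by dominated convergence (measurability in `s` is read
off the weak equation), so the energy is conserved as soon as `⟨φ, μ_s⟩` is bounded on `[0,t]`.
That bound comes from the same estimate for the truncated mass `1_{[0,2N]}`, `N` large, through a
continuity argument: while the truncated mass stays below `m₀ + 1`, `⟨φ, μ_s⟩` stays below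
`m₀ + 1 + 2E₀`, and then the truncated mass moves by less than `1`.
-/

open Filter Topology ENNReal

lemma lintegral_prod_prod_mul {α β γ : Type*} [MeasurableSpace α] [MeasurableSpace β]
    [MeasurableSpace γ] {μ₁ : Measure α} {μ₂ : Measure β} {μ₃ : Measure γ} [SFinite μ₂]
    [SFinite μ₃] {a : α → ℝ≥0∞} {b : β → ℝ≥0∞} {c : γ → ℝ≥0∞} (ha : AEMeasurable a μ₁)
    (hb : AEMeasurable b μ₂) (hc : AEMeasurable c μ₃) :
    ∫⁻ p, a p.1 * (b p.2.1 * c p.2.2) ∂(μ₁.prod (μ₂.prod μ₃)) =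
      (∫⁻ x, a x ∂μ₁) * ((∫⁻ y, b y ∂μ₂) * ∫⁻ z, c z ∂μ₃) := by
  rw [lintegral_prod_mul (g := fun q : β × γ => b q.1 * c q.2) ha
    ((hb.comp_fst).mul hc.comp_snd), lintegral_prod_mul hb hc]

lemma ae_nonneg_of_measure_Iio_eq_zero {ν : Measure ℝ} (h : ν (Iio 0) = 0) :
    ∀ᵐ ω ∂ν, 0 ≤ ω :=
  (measure_eq_zero_iff_ae_notMem.mp h).mono fun _ h => not_lt.mp h

lemma testFun_indicator {g : ℝ → ℝ} (hg : Continuous g) {S : Set ℝ} (hS : MeasurableSet S)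
    {a b : ℝ} (hSab : S ⊆ Icc a b) : TestFun (S.indicator g) := by
  obtain ⟨C, hC⟩ := (isCompact_Icc (a := a) (b := b)).exists_bound_of_continuousOn hg.continuousOn
  refine ⟨hg.measurable.indicator hS, ⟨max C 0, fun ω => ?_⟩, ⟨max |a| |b|, fun ω hω => ?_⟩⟩
  · by_cases h : ω ∈ S
    · rw [indicator_of_mem h]
      exact (hC ω (hSab h)).trans (le_max_left _ _)
    · simp [indicator_of_notMem h]
  · exact indicator_of_notMem (fun h => hω.not_ge (abs_le_max_abs_abs (hSab h).1 (hSab h).2)) g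

lemma TestFun.integrable {f : ℝ → ℝ} (hf : TestFun f) (ν : Measure ℝ) [IsFiniteMeasure ν] :
    Integrable f ν :=
  let ⟨hmeas, ⟨C, hC⟩, _⟩ := hf
  (integrable_const C).mono' hmeas.aestronglyMeasurable (ae_of_all _ hC)

lemma continuousOn_const_add_primitive {q : ℝ → ℝ} {v : ℝ} (hq : IntegrableOn q (Ioc 0 v))
    (F₀ : ℝ) : ContinuousOn (fun u => F₀ + ∫ s in Ioc 0 u, q s) (Icc 0 v) :=
  continuousOn_const.add
    (intervalIntegral.continuousOn_primitive ((integrableOn_Icc_iff_integrableOn_Ioc).mpr hq))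

/-- A continuity argument. `q` need not be integrable: where it is not, the junk value
`∫ = 0` gives `F = F₀ < b`. -/
lemma bootstrap_of_eq_add_integral {F q : ℝ → ℝ} {F₀ b t : ℝ}
    (hF : ∀ u ∈ Icc 0 t, F u = F₀ + ∫ s in Ioc 0 u, q s)
    (hstep : ∀ u ∈ Icc 0 t, (∀ s ∈ Ico 0 u, F s ≤ b) → F u < b) :
    ∀ u ∈ Icc 0 t, F u ≤ b := by
  by_contra! ⟨u₁, hu₁, hbad⟩
  have hF₀ : F₀ < b := by
    have h0 : (0 : ℝ) ∈ Icc 0 t := ⟨le_rfl, hu₁.1.trans hu₁.2⟩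
    simpa [hF 0 h0] using hstep 0 h0 (by simp)
  by_cases hq : IntegrableOn q (Ioc 0 u₁)
  swap
  · rw [hF u₁ hu₁, integral_undef hq, add_zero] at hbad
    linarith
  set S := {u ∈ Icc 0 u₁ | b < F u}
  have hS : S.Nonempty := ⟨u₁, ⟨hu₁.1, le_rfl⟩, hbad⟩
  have hSbdd : BddBelow S := ⟨0, fun u hu => hu.1.1⟩
  set c := sInf S
  have hc : c ∈ Icc 0 u₁ := ⟨le_csInf hS fun u hu => hu.1.1, csInf_le hSbdd hS.some_mem |>.trans
    hS.some_mem.1.2⟩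
  have hFc : F c < b := hstep c ⟨hc.1, hc.2.trans hu₁.2⟩ fun s hs =>
    not_lt.mp fun h => hs.2.not_ge (csInf_le hSbdd ⟨⟨hs.1, hs.2.le.trans hc.2⟩, h⟩)
  have hcont : ContinuousOn F (Icc 0 u₁) := (continuousOn_const_add_primitive hq F₀).congr
    fun u hu => hF u ⟨hu.1, hu.2.trans hu₁.2⟩
  have : (𝓝[S] c).NeBot :=
    mem_closure_iff_nhdsWithin_neBot.mp ((isGLB_csInf hS hSbdd).mem_closure hS)
  have hlt : ∀ᶠ u in 𝓝[S] c, F u < b :=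
    ((hcont c hc).mono_left (nhdsWithin_mono _ fun u hu => hu.1)).eventually (gt_mem_nhds hFc)
  obtain ⟨u, hub, huS⟩ := (hlt.and (eventually_nhdsWithin_of_forall fun u hu => hu.2)).exists
  exact hub.not_gt huS

/-- The primitive is continuous on `[0, c)`, where `c` is the supremum of the times up to which
`q` is integrable, and vanishes (junk value of the Bochner integral) after `c`. -/
lemma aemeasurable_primitive (q : ℝ → ℝ) (t : ℝ) :
    AEMeasurable (fun u => ∫ s in Ioc 0 u, q s) (volume.restrict (Ioc 0 t)) := by
  set G := fun u => ∫ s in Ioc 0 u, q s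
  set U := {u ∈ Icc 0 t | IntegrableOn q (Ioc 0 u)}
  rcases lt_or_ge t 0 with ht | ht
  · simp [Ioc_eq_empty_of_le ht.le]
  have h0U : (0 : ℝ) ∈ U := ⟨⟨le_rfl, ht⟩, by simp⟩
  have hUbdd : BddAbove U := ⟨t, fun u hu => hu.1.2⟩
  set c := sSup U
  have hc0 : 0 ≤ c := le_csSup hUbdd h0U
  have hcont : ContinuousOn G (Ico 0 c) := by
    intro u hu
    obtain ⟨v, hvU, huv⟩ := exists_lt_of_lt_csSup ⟨0, h0U⟩ hu.2
    have hv : ContinuousOn G (Icc 0 v) :=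
      (continuousOn_const_add_primitive hvU.2 0).congr fun w _ => (zero_add _).symm
    exact (hv u ⟨hu.1, huv.le⟩).mono_of_mem_nhdsWithin
      (mem_nhdsWithin.mpr ⟨Iio v, isOpen_Iio, huv, fun w hw => ⟨hw.2.1, hw.1.le⟩⟩)
  have hzero : ∀ u ∈ Ioc c t, G u = 0 := fun u hu =>
    integral_undef fun hq => hu.1.not_ge (le_csSup hUbdd ⟨⟨hc0.trans hu.1.le, hu.2⟩, hq⟩)
  have hae : G =ᵐ[volume.restrict (Ioc 0 t)] (Ico 0 c).indicator G := by
    filter_upwards [ae_restrict_mem measurableSet_Ioc,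
      ae_restrict_of_ae (measure_eq_zero_iff_ae_notMem.mp (measure_singleton (μ := volume) c))]
      with u hu huc
    rcases lt_or_gt_of_ne (show u ≠ c from huc) with h | h
    · rw [indicator_of_mem (show u ∈ Ico 0 c from ⟨hu.1.le, h⟩)]
    · rw [indicator_of_notMem fun h' => h'.2.not_gt h, hzero u ⟨h, hu.2⟩]
  refine AEMeasurable.congr ?_ hae.symm
  rw [aemeasurable_indicator_iff measurableSet_Ico, Measure.restrict_restrict measurableSet_Ico]
  exact (hcont.aemeasurable measurableSet_Ico).mono_measure
    (Measure.restrict_mono inter_subset_left le_rfl)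

lemma phi_nonneg {ω : ℝ} (hω : 0 ≤ ω) : 0 ≤ phi ω := by unfold phi; linarith

lemma continuous_phi : Continuous phi := continuous_id.add continuous_const

def phiTail (r : ℝ) : ℝ → ℝ := (Ioi r).indicator phi

lemma phiTail_nonneg (r : ℝ) {ω : ℝ} (hω : 0 ≤ ω) : 0 ≤ phiTail r ω :=
  indicator_apply_nonneg fun _ => phi_nonneg hω

def phiMoment (ν : Measure ℝ) : ℝ≥0∞ := ∫⁻ ω, ENNReal.ofReal (phi ω) ∂ν

def phiSqTail (r : ℝ) (ν : Measure ℝ) : ℝ≥0∞ := ∫⁻ ω in Ioi r, ENNReal.ofReal (phi ω ^ 2) ∂ν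

lemma lintegral_phiTail_mul_phi (r : ℝ) (ν : Measure ℝ) :
    ∫⁻ ω, ENNReal.ofReal (phiTail r ω * phi ω) ∂ν = phiSqTail r ν := by
  rw [phiSqTail, ← lintegral_indicator measurableSet_Ioi]
  congr 1 with ω
  by_cases h : ω ∈ Ioi r <;> simp [phiTail, h, sq]

lemma phiMoment_le {ν : Measure ℝ} (hsupp : ν (Iio 0) = 0) {n : ℝ} (hn : 1 ≤ n) :
    phiMoment ν ≤ ν (Icc 0 n) + 2 * ∫⁻ ω, ENNReal.ofReal ω ∂ν := by
  calc phiMoment ν ≤ ∫⁻ ω, ((Icc 0 n).indicator 1 ω + 2 * ENNReal.ofReal ω) ∂ν := by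
        refine lintegral_mono_ae ((ae_nonneg_of_measure_Iio_eq_zero hsupp).mono fun ω hω => ?_)
        by_cases h : ω ≤ n
        · rw [indicator_of_mem (show ω ∈ Icc 0 n from ⟨hω, h⟩), phi,
            ENNReal.ofReal_add hω zero_le_one, ENNReal.ofReal_one, add_comm, Pi.one_apply]
          gcongr
          exact le_mul_of_one_le_left zero_le (by norm_num)
        · rw [indicator_of_notMem (show ω ∉ Icc 0 n from fun h' => h h'.2), zero_add,
            ← ENNReal.ofReal_ofNat, ← ENNReal.ofReal_mul zero_le_two]
          exact ENNReal.ofReal_le_ofReal (by unfold phi; linarith)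
    _ = ν (Icc 0 n) + 2 * ∫⁻ ω, ENNReal.ofReal ω ∂ν := by
        rw [lintegral_add_left (measurable_one.indicator measurableSet_Icc),
          lintegral_indicator_one measurableSet_Icc,
          lintegral_const_mul _ ENNReal.measurable_ofReal]

lemma testFun_indicator_Ioc_phi_sq (r : ℝ) (k : ℕ) :
    TestFun ((Ioc r k).indicator fun ω => phi ω ^ 2) :=
  testFun_indicator (continuous_phi.pow 2) measurableSet_Ioc Ioc_subset_Icc_self

lemma phiSqTail_eq_iSup (ν : Measure ℝ) [IsFiniteMeasure ν] (r : ℝ) :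
    phiSqTail r ν =
      ⨆ k : ℕ, ENNReal.ofReal (∫ ω, (Ioc r k).indicator (fun ω => phi ω ^ 2) ω ∂ν) := by
  set ν' := ν.withDensity fun ω => ENNReal.ofReal (phi ω ^ 2)
  have hk : ∀ k : ℕ, ENNReal.ofReal (∫ ω, (Ioc r k).indicator (fun ω => phi ω ^ 2) ω ∂ν) =
      ν' (Ioc r k) := by
    intro k
    rw [withDensity_apply _ measurableSet_Ioc, ofReal_integral_eq_lintegral_ofReal
      ((testFun_indicator_Ioc_phi_sq r k).integrable ν)
      (ae_of_all _ fun ω => indicator_nonneg (fun _ _ => sq_nonneg _) ω),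
      ← lintegral_indicator measurableSet_Ioc]
    exact congrArg _ (indicator_comp_of_zero ENNReal.ofReal_zero).symm
  rw [iSup_congr hk, ← Monotone.measure_iUnion fun k l hkl =>
    Ioc_subset_Ioc_right (by exact_mod_cast hkl), iUnion_Ioc_eq_Ioi_self_iff.mpr fun x _ =>
    exists_nat_ge x]
  exact (withDensity_apply _ measurableSet_Ioi).symm

lemma tendsto_phiSqTail_atTop {ν : Measure ℝ} {r₀ : ℝ} (h : phiSqTail r₀ ν ≠ ⊤) :
    Tendsto (fun m : ℕ => phiSqTail m ν) atTop (𝓝 0) := by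
  set ν' := ν.withDensity fun ω => ENNReal.ofReal (phi ω ^ 2)
  have hν' : ∀ r, phiSqTail r ν = ν' (Ioi r) := fun r =>
    (withDensity_apply _ measurableSet_Ioi).symm
  have hanti : Antitone fun m : ℕ => Ioi (m : ℝ) := fun k l hkl =>
    Ioi_subset_Ioi (by exact_mod_cast hkl)
  have hempty : ⋂ m : ℕ, Ioi (m : ℝ) = ∅ :=
    eq_empty_of_forall_notMem fun ω hω => (Nat.le_ceil ω).not_gt (mem_iInter.mp hω _)
  have hfin : ν' (Ioi (⌈r₀⌉₊ : ℝ)) ≠ ⊤ :=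
    ne_top_of_le_ne_top (hν' r₀ ▸ h) (measure_mono (Ioi_subset_Ioi (Nat.le_ceil r₀)))
  have := tendsto_measure_iInter_atTop (fun _ => measurableSet_Ioi.nullMeasurableSet) hanti
    ⟨_, hfin⟩
  simpa [hν', hempty, Function.comp_def] using this

def TailControlled (f : ℝ → ℝ) (r : ℝ) : Prop :=
  ∀ x y z : ℝ, 0 ≤ x → 0 ≤ y → 0 ≤ z → z ≤ x + y →
    |f (x + y - z) + f z - f y - f x| ≤ 3 * (phiTail r x + phiTail r y + phiTail r z)

section CollisionInvariant

variable {g : ℝ → ℝ}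

lemma indicator_Ioi_two_mul_le_phiTail (hgφ : ∀ ω, 0 ≤ ω → g ω ≤ phi ω) (r : ℝ) {w : ℝ}
    (hw : 0 ≤ w) : (Ioi (2 * r)).indicator g w ≤ phiTail r w := by
  simp only [phiTail, indicator_apply, mem_Ioi]
  split_ifs with h₂ h₁ h₁
  · exact hgφ w hw
  · exact absurd (by rcases le_or_gt 0 r with hr | hr <;> linarith) h₁
  · unfold phi; linarith
  · exact le_rfl

/-- If `x + y - z > 2r` then `x > r` or `y > r`. -/
lemma indicator_Ioi_two_mul_le_phiTail_add (hgφ : ∀ ω, 0 ≤ ω → g ω ≤ phi ω) (r : ℝ)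
    {x y z : ℝ} (hx : 0 ≤ x) (hy : 0 ≤ y) (hz : 0 ≤ z) (hzxy : z ≤ x + y) :
    (Ioi (2 * r)).indicator g (x + y - z) ≤ 2 * (phiTail r x + phiTail r y) := by
  have hgw := hgφ (x + y - z) (by linarith)
  simp only [phiTail, indicator_apply, mem_Ioi, phi] at hgw ⊢
  split_ifs <;> linarith

lemma indicator_Icc_eq_sub_indicator_Ioi (a : ℝ) {w : ℝ} (hw : 0 ≤ w) :
    (Icc 0 a).indicator g w = g w - (Ioi a).indicator g w := by
  simp only [indicator_apply, mem_Icc, mem_Ioi]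
  split_ifs with h₁ h₂ h₂
  · linarith [h₁.2]
  · ring
  · ring
  · exact absurd ⟨hw, not_lt.mp h₂⟩ h₁

lemma tailControlled_indicator_Icc (hinv : ∀ x y z, g (x + y - z) + g z - g y - g x = 0)
    (hg₀ : ∀ ω, 0 ≤ ω → 0 ≤ g ω) (hgφ : ∀ ω, 0 ≤ ω → g ω ≤ phi ω) (r : ℝ) :
    TailControlled ((Icc 0 (2 * r)).indicator g) r := by
  intro x y z hx hy hz hzxy
  have hw : 0 ≤ x + y - z := by linarith
  set h := (Ioi (2 * r)).indicator g
  have hh₀ : ∀ ω, 0 ≤ ω → 0 ≤ h ω := fun ω hω => indicator_apply_nonneg fun _ => hg₀ ω hω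
  rw [indicator_Icc_eq_sub_indicator_Ioi _ hw, indicator_Icc_eq_sub_indicator_Ioi _ hz,
    indicator_Icc_eq_sub_indicator_Ioi _ hy, indicator_Icc_eq_sub_indicator_Ioi _ hx]
  have hw' := indicator_Ioi_two_mul_le_phiTail_add hgφ r hx hy hz hzxy
  have hx' := indicator_Ioi_two_mul_le_phiTail hgφ r hx
  have hy' := indicator_Ioi_two_mul_le_phiTail hgφ r hy
  have hz' := indicator_Ioi_two_mul_le_phiTail hgφ r hz
  have := hinv x y z
  rw [abs_le]
  constructor <;> linarith [hh₀ _ hw, hh₀ _ hx, hh₀ _ hy, hh₀ _ hz, phiTail_nonneg r hx,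
    phiTail_nonneg r hy, phiTail_nonneg r hz]

lemma tailControlled_indicator_Icc_one (r : ℝ) :
    TailControlled ((Icc 0 (2 * r)).indicator 1) r :=
  tailControlled_indicator_Icc (fun _ _ _ => by simp) (fun _ _ => zero_le_one)
    (fun ω hω => by simp [phi]; linarith) r

lemma tailControlled_indicator_Icc_id (r : ℝ) :
    TailControlled ((Icc 0 (2 * r)).indicator id) r :=
  tailControlled_indicator_Icc (fun _ _ _ => by simp) (fun _ hω => hω)
    (fun ω _ => by simp [phi]) r

end CollisionInvariant

section CollisionOperator

variable {K : ℝ → ℝ → ℝ → ℝ}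

lemma enorm_collisionIntegrand_le
    (hK₀ : ∀ x y z : ℝ, 0 ≤ x → 0 ≤ y → 0 ≤ z → 0 ≤ K x y z) (hKsub : IsSubmultiplicative K)
    {f : ℝ → ℝ} {r : ℝ} (hf : TailControlled f r) (p : ℝ × ℝ × ℝ) :
    ‖collisionIntegrand K f p‖ₑ ≤
      3 * (ENNReal.ofReal (phiTail r p.1 * phi p.1) *
            (ENNReal.ofReal (phi p.2.1) * ENNReal.ofReal (phi p.2.2)) +
          ENNReal.ofReal (phi p.1) *
            (ENNReal.ofReal (phiTail r p.2.1 * phi p.2.1) * ENNReal.ofReal (phi p.2.2)) +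
          ENNReal.ofReal (phi p.1) *
            (ENNReal.ofReal (phi p.2.1) * ENNReal.ofReal (phiTail r p.2.2 * phi p.2.2))) := by
  obtain ⟨x, y, z⟩ := p
  unfold collisionIntegrand
  split_ifs with hD
  · obtain ⟨hx, hy, hz, hzxy⟩ := hD
    have := phiTail_nonneg r hx; have := phiTail_nonneg r hy; have := phiTail_nonneg r hz
    have := phi_nonneg hx; have := phi_nonneg hy; have := phi_nonneg hz
    have hreal : |(f (x + y - z) + f z - f y - f x) * K x y z| ≤
        3 * (phiTail r x * phi x * (phi y * phi z) + phi x * (phiTail r y * phi y * phi z) +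
          phi x * (phi y * (phiTail r z * phi z))) := by
      rw [abs_mul, abs_of_nonneg (hK₀ x y z hx hy hz)]
      calc _ ≤ 3 * (phiTail r x + phiTail r y + phiTail r z) * (phi x * phi y * phi z) :=
            mul_le_mul (hf x y z hx hy hz hzxy) (hKsub x y z hx hy hz) (hK₀ x y z hx hy hz)
              (by positivity)
        _ = _ := by ring
    rw [Real.enorm_eq_ofReal_abs]
    refine (ENNReal.ofReal_le_ofReal hreal).trans (le_of_eq ?_)
    simp (disch := positivity) only [ENNReal.ofReal_mul, ENNReal.ofReal_add, ENNReal.ofReal_ofNat]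
  · simp

lemma enorm_Qpair_le
    (hK₀ : ∀ x y z : ℝ, 0 ≤ x → 0 ≤ y → 0 ≤ z → 0 ≤ K x y z) (hKsub : IsSubmultiplicative K)
    (ν : Measure ℝ) [SFinite ν] {f : ℝ → ℝ} {r : ℝ} (hf : TailControlled f r) :
    ‖Qpair K ν f‖ₑ ≤ 9 * phiSqTail r ν * phiMoment ν ^ 2 := by
  set Φ : ℝ → ℝ≥0∞ := fun ω => ENNReal.ofReal (phi ω)
  set T : ℝ → ℝ≥0∞ := fun ω => ENNReal.ofReal (phiTail r ω * phi ω)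
  have hΦ : Measurable Φ := continuous_phi.measurable.ennreal_ofReal
  have hT : Measurable T := ((continuous_phi.measurable.indicator measurableSet_Ioi).mul
    continuous_phi.measurable).ennreal_ofReal
  calc ‖Qpair K ν f‖ₑ ≤ ‖∫ p, collisionIntegrand K f p ∂(ν.prod (ν.prod ν))‖ₑ := by
        rw [Qpair, enorm_mul]
        exact mul_le_of_le_one_left zero_le (by norm_num [Real.enorm_eq_ofReal_abs])
    _ ≤ ∫⁻ p, ‖collisionIntegrand K f p‖ₑ ∂(ν.prod (ν.prod ν)) :=
        enorm_integral_le_lintegral_enorm _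
    _ ≤ ∫⁻ p, 3 * (T p.1 * (Φ p.2.1 * Φ p.2.2) + Φ p.1 * (T p.2.1 * Φ p.2.2) +
          Φ p.1 * (Φ p.2.1 * T p.2.2)) ∂(ν.prod (ν.prod ν)) :=
        lintegral_mono (enorm_collisionIntegrand_le hK₀ hKsub hf)
    _ = 3 * (phiSqTail r ν * (phiMoment ν * phiMoment ν) +
          phiMoment ν * (phiSqTail r ν * phiMoment ν) +
          phiMoment ν * (phiMoment ν * phiSqTail r ν)) := by
        rw [lintegral_const_mul _ (by fun_prop), lintegral_add_left (by fun_prop),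
          lintegral_add_left (by fun_prop), lintegral_prod_prod_mul hT.aemeasurable
          hΦ.aemeasurable hΦ.aemeasurable, lintegral_prod_prod_mul hΦ.aemeasurable
          hT.aemeasurable hΦ.aemeasurable, lintegral_prod_prod_mul hΦ.aemeasurable
          hΦ.aemeasurable hT.aemeasurable, lintegral_phiTail_mul_phi]
        rfl
    _ = 9 * phiSqTail r ν * phiMoment ν ^ 2 := by ring

end CollisionOperator

section LocalSolution

variable {K : ℝ → ℝ → ℝ → ℝ} {μ₀ : Measure ℝ} {T : ℝ} {μ : ℝ → Measure ℝ}

lemma IsLocalSolution.aemeasurable_integral (hloc : IsLocalSolution K μ₀ T μ) {t : ℝ}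
    (ht : t < T) {f : ℝ → ℝ} (hf : TestFun f) :
    AEMeasurable (fun s => ∫ ω, f ω ∂(μ s)) (volume.restrict (Ioc 0 t)) :=
  (aemeasurable_const.add (aemeasurable_primitive _ t)).congr <| by
    filter_upwards [ae_restrict_mem measurableSet_Ioc] with s hs
    exact (hloc.eqn f hf s hs.1.le (hs.2.trans_lt ht)).symm

lemma IsLocalSolution.aemeasurable_phiSqTail (hloc : IsLocalSolution K μ₀ T μ) {t : ℝ}
    (ht : t < T) (r : ℝ) :
    AEMeasurable (fun s => phiSqTail r (μ s)) (volume.restrict (Ioc 0 t)) := by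
  refine (AEMeasurable.iSup fun k : ℕ =>
    (hloc.aemeasurable_integral ht (testFun_indicator_Ioc_phi_sq r k)).ennreal_ofReal).congr ?_
  filter_upwards [ae_restrict_mem measurableSet_Ioc] with s hs
  have := hloc.finite s hs.1.le (hs.2.trans_lt ht)
  exact (phiSqTail_eq_iSup (μ s) r).symm

lemma IsLocalSolution.tendsto_lintegral_phiSqTail (hloc : IsLocalSolution K μ₀ T μ) {t : ℝ}
    (ht : t < T) (hA : ∫⁻ s in Ioc 0 t, ∫⁻ ω, ENNReal.ofReal (phi ω ^ 2) ∂(μ s) ≠ ⊤) :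
    Tendsto (fun m : ℕ => ∫⁻ s in Ioc 0 t, phiSqTail m (μ s)) atTop (𝓝 0) := by
  have hbound : ∫⁻ s in Ioc 0 t, phiSqTail 0 (μ s) ≠ ⊤ :=
    ne_top_of_le_ne_top hA (lintegral_mono fun s => setLIntegral_le_lintegral _ _)
  simpa using tendsto_lintegral_of_dominated_convergence' _
    (fun m => hloc.aemeasurable_phiSqTail ht m)
    (fun m => ae_of_all _ fun s => lintegral_mono_set (Ioi_subset_Ioi m.cast_nonneg)) hbound
    ((ae_lt_top' (hloc.aemeasurable_phiSqTail ht 0) hbound).mono fun s hs =>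
      tendsto_phiSqTail_atTop hs.ne)

lemma IsLocalSolution.enorm_integral_Qpair_le (hloc : IsLocalSolution K μ₀ T μ)
    (hK₀ : ∀ x y z : ℝ, 0 ≤ x → 0 ≤ y → 0 ≤ z → 0 ≤ K x y z) (hKsub : IsSubmultiplicative K)
    {f : ℝ → ℝ} {r : ℝ} (hf : TailControlled f r) {u : ℝ} (hu : u < T) {C : ℝ≥0∞}
    (hC : C ≠ ⊤) (hB : ∀ s ∈ Ioo 0 u, phiMoment (μ s) ≤ C) :
    ‖∫ s in Ioc 0 u, Qpair K (μ s) f‖ₑ ≤ 9 * C ^ 2 * ∫⁻ s in Ioc 0 u, phiSqTail r (μ s) := by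
  rw [← Measure.restrict_congr_set Ioo_ae_eq_Ioc]
  calc ‖∫ s in Ioo 0 u, Qpair K (μ s) f‖ₑ ≤ ∫⁻ s in Ioo 0 u, ‖Qpair K (μ s) f‖ₑ :=
        enorm_integral_le_lintegral_enorm _
    _ ≤ ∫⁻ s in Ioo 0 u, 9 * C ^ 2 * phiSqTail r (μ s) := by
        refine setLIntegral_mono' measurableSet_Ioo fun s hs => ?_
        have := hloc.finite s hs.1.le (hs.2.trans hu)
        calc ‖Qpair K (μ s) f‖ₑ ≤ 9 * phiSqTail r (μ s) * phiMoment (μ s) ^ 2 :=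
              enorm_Qpair_le hK₀ hKsub _ hf
          _ ≤ 9 * phiSqTail r (μ s) * C ^ 2 := by gcongr; exact hB s hs
          _ = 9 * C ^ 2 * phiSqTail r (μ s) := by ring
    _ = 9 * C ^ 2 * ∫⁻ s in Ioo 0 u, phiSqTail r (μ s) :=
        lintegral_const_mul' _ _ (by finiteness)

lemma IsLocalSolution.phiMoment_le_of_measureReal_Icc_le (hloc : IsLocalSolution K μ₀ T μ)
    {s : ℝ} (hs : 0 ≤ s) (hsT : s < T) {n M : ℝ} (hn : 1 ≤ n) (hM : 0 ≤ M)
    (hmass : (μ s).real (Icc 0 n) ≤ M) :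
    phiMoment (μ s) ≤ ENNReal.ofReal M + 2 * ∫⁻ ω, ENNReal.ofReal ω ∂μ₀ := by
  have := hloc.finite s hs hsT
  refine (phiMoment_le (hloc.supp s hs hsT) hn).trans
    (add_le_add ?_ (mul_le_mul_right (hloc.energy s hs hsT) 2))
  exact (ENNReal.le_ofReal_iff_toReal_le (measure_ne_top _ _) hM).mpr hmass

lemma IsLocalSolution.exists_phiMoment_le (hloc : IsLocalSolution K μ₀ T μ)
    (hK₀ : ∀ x y z : ℝ, 0 ≤ x → 0 ≤ y → 0 ≤ z → 0 ≤ K x y z) (hKsub : IsSubmultiplicative K)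
    [IsFiniteMeasure μ₀] (hE₀ : ∫⁻ ω, ENNReal.ofReal ω ∂μ₀ ≠ ⊤) {t : ℝ} (ht : t < T)
    (hW : Tendsto (fun m : ℕ => ∫⁻ s in Ioc 0 t, phiSqTail m (μ s)) atTop (𝓝 0)) :
    ∃ C ≠ ⊤, ∀ s ∈ Icc 0 t, phiMoment (μ s) ≤ C := by
  set m₀ := μ₀.real univ
  set C := ENNReal.ofReal (m₀ + 1) + 2 * ∫⁻ ω, ENNReal.ofReal ω ∂μ₀
  have hC : C ≠ ⊤ := by finiteness
  obtain ⟨N, hN, hsmall⟩ :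
      ∃ N : ℕ, 1 ≤ N ∧ 9 * C ^ 2 * ∫⁻ s in Ioc 0 t, phiSqTail N (μ s) < 1 := by
    have := ENNReal.Tendsto.const_mul hW (Or.inr (by finiteness : 9 * C ^ 2 ≠ ⊤))
    rw [mul_zero] at this
    exact ((eventually_ge_atTop 1).and (this.eventually (gt_mem_nhds zero_lt_one))).exists
  set χ := (Icc 0 (2 * (N : ℝ))).indicator (1 : ℝ → ℝ)
  have hχ : TestFun χ := testFun_indicator continuous_const measurableSet_Icc subset_rfl
  have hmass : ∀ s ∈ Icc 0 t, ∫ ω, χ ω ∂(μ s) ≤ m₀ + 1 → phiMoment (μ s) ≤ C := by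
    intro s hs hle
    rw [integral_indicator_one measurableSet_Icc] at hle
    exact hloc.phiMoment_le_of_measureReal_Icc_le hs.1 (hs.2.trans_lt ht)
      (by norm_cast; omega) (add_nonneg measureReal_nonneg zero_le_one) hle
  have hF₀ : ∫ ω, χ ω ∂μ₀ ≤ m₀ := by
    rw [integral_indicator_one measurableSet_Icc]
    exact measureReal_mono (subset_univ _)
  have hbound := bootstrap_of_eq_add_integral (F := fun s => ∫ ω, χ ω ∂(μ s)) (b := m₀ + 1)
    (fun u hu => hloc.eqn χ hχ u hu.1 (hu.2.trans_lt ht)) fun u hu hbelow => by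
      have hQ := hloc.enorm_integral_Qpair_le hK₀ hKsub (tailControlled_indicator_Icc_one N)
        (hu.2.trans_lt ht) hC fun s hs =>
          hmass s ⟨hs.1.le, hs.2.le.trans hu.2⟩ (hbelow s ⟨hs.1.le, hs.2⟩)
      have hlt : |∫ s in Ioc 0 u, Qpair K (μ s) χ| < 1 := by
        rw [← ENNReal.ofReal_lt_one, ← Real.enorm_eq_ofReal_abs]
        refine hQ.trans_lt (lt_of_le_of_lt ?_ hsmall)
        gcongr
        exact hu.2
      simp only [hloc.eqn χ hχ u hu.1 (hu.2.trans_lt ht)]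
      linarith [le_abs_self (∫ s in Ioc 0 u, Qpair K (μ s) χ)]
  exact ⟨C, hC, fun s hs => hmass s hs (hbound s hs)⟩

end LocalSolution

lemma integrable_id_of_lintegral_ofReal_lt_top {ν : Measure ℝ} (hsupp : ν (Iio 0) = 0)
    (hE : ∫⁻ ω, ENNReal.ofReal ω ∂ν < ⊤) : Integrable (fun ω => ω) ν :=
  ⟨aestronglyMeasurable_id,
    (hasFiniteIntegral_iff_ofReal (ae_nonneg_of_measure_Iio_eq_zero hsupp)).mpr hE⟩

lemma tendsto_integral_indicator_Icc_id {ν : Measure ℝ} (hsupp : ν (Iio 0) = 0)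
    (hE : ∫⁻ ω, ENNReal.ofReal ω ∂ν < ⊤) :
    Tendsto (fun m : ℕ => ∫ ω, (Icc 0 (2 * (m : ℝ))).indicator id ω ∂ν) atTop
      (𝓝 (∫ ω, ω ∂ν)) := by
  refine tendsto_integral_of_dominated_convergence (fun ω => ‖ω‖)
    (fun m => (measurable_id.indicator measurableSet_Icc).aestronglyMeasurable)
    (integrable_id_of_lintegral_ofReal_lt_top hsupp hE).norm
    (fun m => ae_of_all _ fun ω => norm_indicator_le_norm_self _ _) ?_
  filter_upwards [ae_nonneg_of_measure_Iio_eq_zero hsupp] with ω hω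
  refine tendsto_const_nhds.congr' ((eventually_ge_atTop ⌈ω⌉₊).mono fun m hm => ?_)
  have : ω ≤ m := (Nat.le_ceil ω).trans (by exact_mod_cast hm)
  exact (indicator_of_mem (show ω ∈ Icc 0 (2 * (m : ℝ)) from ⟨hω, by linarith⟩) id).symm

/-- Any strong local solution starting from `μ₀` (finite, nonnegative,
`⟨φ, μ₀⟩ < ∞`) is conservative: the total energy `∫ ω μ_t(dω)` is finite and constant. -/
theorem strong_solution_is_conservative
    (K : ℝ → ℝ → ℝ → ℝ) (hK : IsModelKernel K) (hKsub : IsSubmultiplicative K)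
    (μ₀ : Measure ℝ) [IsFiniteMeasure μ₀] (hsupp₀ : μ₀ (Set.Iio 0) = 0)
    (hphi₀ : ∫⁻ ω, ENNReal.ofReal (phi ω) ∂μ₀ < ⊤)
    (T : ℝ) (μ : ℝ → Measure ℝ) (hμ : IsStrongSolution K μ₀ T μ) :
    ∀ t, 0 ≤ t → t < T →
      (∫⁻ ω, ENNReal.ofReal ω ∂(μ t) < ⊤) ∧
      ∫ ω, ω ∂(μ t) = ∫ ω, ω ∂μ₀ := by
  obtain ⟨hloc, hstrong⟩ := hμ
  intro t ht0 htT
  have hE₀ : ∫⁻ ω, ENNReal.ofReal ω ∂μ₀ < ⊤ :=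
    (lintegral_mono fun ω => ENNReal.ofReal_le_ofReal (by unfold phi; linarith)).trans_lt hphi₀
  have hEt := (hloc.energy t ht0 htT).trans_lt hE₀
  refine ⟨hEt, ?_⟩
  have hW := hloc.tendsto_lintegral_phiSqTail htT (hstrong t ht0 htT).ne
  obtain ⟨C, hC, hB⟩ := hloc.exists_phiMoment_le hK.nonneg hKsub hE₀.ne htT hW
  set f : ℕ → ℝ → ℝ := fun m => (Icc 0 (2 * (m : ℝ))).indicator id
  have hdiff : Tendsto (fun m => ∫ ω, f m ω ∂(μ t) - ∫ ω, f m ω ∂μ₀) atTop (𝓝 0) := by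
    rw [tendsto_zero_iff_enorm_tendsto_zero]
    refine tendsto_of_tendsto_of_tendsto_of_le_of_le tendsto_const_nhds
      (by simpa using ENNReal.Tendsto.const_mul hW (Or.inr (by finiteness : 9 * C ^ 2 ≠ ⊤)))
      (fun _ => zero_le) fun m => ?_
    rw [hloc.eqn (f m) (testFun_indicator continuous_id measurableSet_Icc subset_rfl) t ht0 htT,
      add_sub_cancel_left]
    exact hloc.enorm_integral_Qpair_le hK.nonneg hKsub (tailControlled_indicator_Icc_id m) htT hC
      fun s hs => hB s ⟨hs.1.le, hs.2.le⟩
  have hlim := (tendsto_integral_indicator_Icc_id (hloc.supp t ht0 htT) hEt).sub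
    (tendsto_integral_indicator_Icc_id hsupp₀ hE₀)
  exact sub_eq_zero.mp (tendsto_nhds_unique hlim hdiff)
end
end

section
/- Let K : [0,∞)³ → [0,∞) be measurable, symmetric in its first two arguments, and bounded: K ≤ Λ < ∞. Then for any given initial probability measure μ₀ on [0,∞), there is at most one family (μ_t)_{t≥0} of probability measures on [0,∞) solving the weak isotropic 4-wave kinetic equation ⟨f, μ_t⟩ = ⟨f, μ₀⟩ + ∫₀ᵗ ⟨f, Q(μ_s)⟩ ds for all bounded continuous f: any two such solutions with the same initial datum coincide for all t ≥ 0. -/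
/-!
Let `d t` be the total variation distance between `μ t` and `ν t`, written as a supremum over
continuous test functions bounded by `1`. For finite measures on a metric space the same
supremum controls bounded measurable test functions, since these are approximated in
`L¹(m + n)` by continuous ones. The collision integrand is bounded by `4Λ‖f‖∞`, and telescoping
over the three factors of `μ ⊗ μ ⊗ μ` gives `|⟨f, Q(m)⟩ - ⟨f, Q(n)⟩| ≤ 6Λ‖f‖∞ · tvDist m n`.
Subtracting the weak equations of two solutions then yields `d t ≤ 6Λ ∫₀ᵗ d`, and Gronwall's
lemma forces `d = 0`.

Measurability of `s ↦ ⟨f, Q(μ s)⟩` is not part of the definition of a weak solution. If it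
failed on some `(0, t]`, the Bochner integral in the equation would be `0` there, so the solution
would stay frozen at its initial value from then on; the collision term is then constant after
the first such time, hence measurable after all.
-/

open MeasureTheory Set Classical

noncomputable section

/-- A family of probability measures on `[0,∞)` solving the weak isotropic 4-wave
kinetic equation against all bounded continuous test functions. -/
def IsWeakSolutionCb (K : ℝ → ℝ → ℝ → ℝ) (μ₀ : Measure ℝ) (μ : ℝ → Measure ℝ) : Prop :=
  (∀ t, 0 ≤ t → IsProbabilityMeasure (μ t) ∧ μ t (Set.Iio 0) = 0) ∧
  ∀ f : ℝ → ℝ, Continuous f → (∃ C, ∀ ω, |f ω| ≤ C) → ∀ t, 0 ≤ t →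
    ∫ ω, f ω ∂(μ t) = ∫ ω, f ω ∂μ₀ + ∫ s in Set.Ioc (0 : ℝ) t, Qpair K (μ s) f

open Filter

section TotalVariation

variable {α : Type*} [TopologicalSpace α] [MeasurableSpace α] {m n p : Measure α}

def tvDist (m n : Measure α) : ℝ :=
  ⨆ f : {f : α → ℝ // Continuous f ∧ ∀ x, |f x| ≤ 1}, |∫ x, f.1 x ∂m - ∫ x, f.1 x ∂n|

lemma abs_integral_sub_le_tvDist [IsFiniteMeasure m] [IsFiniteMeasure n] {f : α → ℝ}
    (hf : Continuous f) (hf1 : ∀ x, |f x| ≤ 1) :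
    |∫ x, f x ∂m - ∫ x, f x ∂n| ≤ tvDist m n := by
  refine le_ciSup (f := fun f : {f : α → ℝ // Continuous f ∧ ∀ x, |f x| ≤ 1} =>
    |∫ x, f.1 x ∂m - ∫ x, f.1 x ∂n|) ⟨m.real univ + n.real univ, ?_⟩ ⟨f, hf, hf1⟩
  rintro _ ⟨⟨g, -, hg1⟩, rfl⟩
  have bound (μ : Measure α) [IsFiniteMeasure μ] : |∫ x, g x ∂μ| ≤ μ.real univ := by
    simpa using norm_integral_le_of_norm_le_const (μ := μ) (f := g) (Eventually.of_forall hg1)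
  exact (abs_sub _ _).trans (add_le_add (bound m) (bound n))

lemma tvDist_le {a : ℝ} (h : ∀ f : α → ℝ, Continuous f → (∀ x, |f x| ≤ 1) →
    |∫ x, f x ∂m - ∫ x, f x ∂n| ≤ a) : tvDist m n ≤ a :=
  have : Nonempty {f : α → ℝ // Continuous f ∧ ∀ x, |f x| ≤ 1} :=
    ⟨0, continuous_const, by simp⟩
  ciSup_le fun f => h f.1 f.2.1 f.2.2

lemma tvDist_nonneg [IsFiniteMeasure m] [IsFiniteMeasure n] : 0 ≤ tvDist m n :=
  (abs_nonneg _).trans (abs_integral_sub_le_tvDist (f := 0) continuous_const (by simp))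

lemma tvDist_comm (m n : Measure α) : tvDist m n = tvDist n m := by
  simp only [tvDist, abs_sub_comm]

lemma tvDist_triangle [IsFiniteMeasure m] [IsFiniteMeasure n] [IsFiniteMeasure p] :
    tvDist m p ≤ tvDist m n + tvDist n p :=
  tvDist_le fun f hf hf1 => (abs_sub_le _ (∫ x, f x ∂n) _).trans
    (add_le_add (abs_integral_sub_le_tvDist hf hf1) (abs_integral_sub_le_tvDist hf hf1))

lemma abs_tvDist_sub_tvDist_le {m' n' : Measure α} [IsFiniteMeasure m] [IsFiniteMeasure n]
    [IsFiniteMeasure m'] [IsFiniteMeasure n'] :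
    |tvDist m n - tvDist m' n'| ≤ tvDist m m' + tvDist n n' := by
  have h1 := tvDist_triangle (m := m) (n := m') (p := n)
  have h2 := tvDist_triangle (m := m') (n := n') (p := n)
  have h3 := tvDist_triangle (m := m') (n := m) (p := n')
  have h4 := tvDist_triangle (m := m) (n := n) (p := n')
  rw [tvDist_comm n' n] at h2
  rw [tvDist_comm m' m] at h3
  exact abs_sub_le_iff.2 ⟨by linarith, by linarith⟩

lemma abs_integral_sub_le_mul_tvDist_of_continuous [IsFiniteMeasure m] [IsFiniteMeasure n]
    {f : α → ℝ} (hf : Continuous f) {M : ℝ} (hM0 : 0 ≤ M) (hM : ∀ x, |f x| ≤ M) :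
    |∫ x, f x ∂m - ∫ x, f x ∂n| ≤ M * tvDist m n := by
  rcases hM0.eq_or_lt with rfl | hM0
  · have : f = 0 := funext fun x => abs_nonpos_iff.1 (hM x)
    simp [this]
  have h := abs_integral_sub_le_tvDist (m := m) (n := n) (hf.div_const M) fun x => by
    rw [abs_div, abs_of_pos hM0]; exact div_le_one_of_le₀ (hM x) hM0.le
  rwa [integral_div, integral_div, ← sub_div, abs_div, abs_of_pos hM0, div_le_iff₀' hM0] at h

end TotalVariation

section TotalVariationMetric

variable {α : Type*} [PseudoMetricSpace α] [MeasurableSpace α] [BorelSpace α] {m n : Measure α}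

lemma eq_of_tvDist_eq_zero [IsFiniteMeasure m] [IsFiniteMeasure n] (h : tvDist m n = 0) :
    m = n :=
  ext_of_forall_integral_eq_of_IsFiniteMeasure fun f => sub_eq_zero.1 <| abs_nonpos_iff.1 <| by
    simpa [h] using abs_integral_sub_le_mul_tvDist_of_continuous (m := m) (n := n) f.continuous
      (norm_nonneg f) fun x => f.norm_coe_le_norm x

lemma abs_sub_projIcc_le {a b y z : ℝ} (hab : a ≤ b) (hy : y ∈ Icc a b) :
    |y - projIcc a b hab z| ≤ |y - z| := by
  simpa [projIcc_of_mem hab hy, Subtype.dist_eq, Real.dist_eq] using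
    (LipschitzWith.projIcc hab).dist_le_mul y z

lemma abs_integral_sub_le_mul_tvDist [IsFiniteMeasure m] [IsFiniteMeasure n] {h : α → ℝ}
    (hh : Measurable h) {M : ℝ} (hM0 : 0 ≤ M) (hM : ∀ x, |h x| ≤ M) :
    |∫ x, h x ∂m - ∫ x, h x ∂n| ≤ M * tvDist m n := by
  have hbdd (μ : Measure α) [IsFiniteMeasure μ] : Integrable h μ :=
    .of_bound hh.aestronglyMeasurable M (Eventually.of_forall hM)
  refine le_of_forall_pos_le_add fun ε hε => ?_
  obtain ⟨g, hg, -⟩ := (hbdd (m + n)).exists_boundedContinuous_integral_sub_le hε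
  set g' : α → ℝ := fun x => projIcc (-M) M (by linarith) (g x)
  have hg' : Continuous g' := continuous_subtype_val.comp (continuous_projIcc.comp g.continuous)
  have hg'M : ∀ x, |g' x| ≤ M := fun x => abs_le.2 (projIcc (-M) M _ (g x)).2
  have hclose : ∀ x, |h x - g' x| ≤ ‖h x - g x‖ := fun x =>
    abs_sub_projIcc_le _ (abs_le.1 (hM x))
  have hg'int (μ : Measure α) [IsFiniteMeasure μ] : Integrable g' μ :=
    .of_bound hg'.aestronglyMeasurable M (Eventually.of_forall hg'M)
  have hdiff (μ : Measure α) [IsFiniteMeasure μ] : Integrable (fun x => |h x - g' x|) μ :=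
    ((hbdd μ).sub (hg'int μ)).abs
  calc |∫ x, h x ∂m - ∫ x, h x ∂n|
      = |(∫ x, g' x ∂m - ∫ x, g' x ∂n) + (∫ x, h x - g' x ∂m - ∫ x, h x - g' x ∂n)| := by
        rw [integral_sub (hbdd m) (hg'int m), integral_sub (hbdd n) (hg'int n)]; ring_nf
    _ ≤ M * tvDist m n + (∫ x, |h x - g' x| ∂m + ∫ x, |h x - g' x| ∂n) :=
        (abs_add_le _ _).trans <| add_le_add
          (abs_integral_sub_le_mul_tvDist_of_continuous hg' hM0 hg'M)
          ((abs_sub _ _).trans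
            (add_le_add abs_integral_le_integral_abs abs_integral_le_integral_abs))
    _ = M * tvDist m n + ∫ x, |h x - g' x| ∂(m + n) := by
        rw [integral_add_measure (hdiff m) (hdiff n)]
    _ ≤ M * tvDist m n + ε := by
        gcongr
        refine (integral_mono (hdiff _) ?_ hclose).trans hg
        exact ((hbdd _).sub (g.integrable _)).norm

variable [IsProbabilityMeasure m] [IsProbabilityMeasure n]

lemma abs_integral_prod_sub_le {β : Type*} [MeasurableSpace β] {P Q : Measure β}
    [IsProbabilityMeasure P] [IsProbabilityMeasure Q] {F : α × β → ℝ} (hF : Measurable F)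
    {B δ : ℝ} (hB0 : 0 ≤ B) (hB : ∀ z, |F z| ≤ B)
    (hδ : ∀ a, |∫ y, F (a, y) ∂P - ∫ y, F (a, y) ∂Q| ≤ δ) :
    |∫ z, F z ∂(m.prod P) - ∫ z, F z ∂(n.prod Q)| ≤ B * tvDist m n + δ := by
  have hFint (μ : Measure (α × β)) [IsFiniteMeasure μ] : Integrable F μ :=
    .of_bound hF.aestronglyMeasurable B (Eventually.of_forall hB)
  set φ : α → ℝ := fun a => ∫ y, F (a, y) ∂P
  set ψ : α → ℝ := fun a => ∫ y, F (a, y) ∂Q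
  have hφ : Measurable φ := hF.stronglyMeasurable.integral_prod_right'.measurable
  have hψ : Measurable ψ := hF.stronglyMeasurable.integral_prod_right'.measurable
  have hslice (ρ : Measure β) [IsProbabilityMeasure ρ] (a : α) : |∫ y, F (a, y) ∂ρ| ≤ B := by
    simpa using norm_integral_le_of_norm_le_const (μ := ρ) (f := fun y => F (a, y))
      (Eventually.of_forall fun y => hB (a, y))
  have hφint : Integrable φ n :=
    .of_bound hφ.aestronglyMeasurable B (Eventually.of_forall (hslice P))
  have hψint : Integrable ψ n :=
    .of_bound hψ.aestronglyMeasurable B (Eventually.of_forall (hslice Q))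
  have hφψ : |∫ a, φ a - ψ a ∂n| ≤ δ := by
    simpa using norm_integral_le_of_norm_le_const (μ := n) (f := fun a => φ a - ψ a)
      (Eventually.of_forall hδ)
  rw [integral_prod F (hFint _), integral_prod F (hFint _)]
  calc |∫ a, φ a ∂m - ∫ a, ψ a ∂n|
      = |(∫ a, φ a ∂m - ∫ a, φ a ∂n) + ∫ a, φ a - ψ a ∂n| := by
        rw [integral_sub hφint hψint]; ring_nf
    _ ≤ B * tvDist m n + δ := (abs_add_le _ _).trans <|
        add_le_add (abs_integral_sub_le_mul_tvDist hφ hB0 (hslice P)) hφψ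

lemma abs_integral_prod_prod_sub_le {F : α × α × α → ℝ} (hF : Measurable F) {B : ℝ}
    (hB0 : 0 ≤ B) (hB : ∀ z, |F z| ≤ B) :
    |∫ z, F z ∂(m.prod (m.prod m)) - ∫ z, F z ∂(n.prod (n.prod n))| ≤ 3 * B * tvDist m n := by
  have hslice (a : α) : Measurable fun z : α × α => F (a, z) :=
    hF.comp (measurable_const.prodMk measurable_id)
  have hslice2 (a b : α) : Measurable fun c : α => F (a, b, c) :=
    hF.comp (measurable_const.prodMk (measurable_const.prodMk measurable_id))
  have h := abs_integral_prod_sub_le (m := m) (n := n) (P := m.prod m) (Q := n.prod n)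
    hF hB0 hB fun a =>
      abs_integral_prod_sub_le (hslice a) hB0 (fun z => hB _) fun b =>
        abs_integral_sub_le_mul_tvDist (hslice2 a b) hB0 fun c => hB _
  linarith

end TotalVariationMetric

section Collision

variable {K : ℝ → ℝ → ℝ → ℝ} {Λ : ℝ} {f g : ℝ → ℝ} {C : ℝ}

lemma measurableSet_Ddom : MeasurableSet Ddom := by
  unfold Ddom; measurability

lemma measurable_collisionIntegrand (hK : Measurable fun p : ℝ × ℝ × ℝ => K p.1 p.2.1 p.2.2)
    (hf : Measurable f) : Measurable (collisionIntegrand K f) := by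
  unfold collisionIntegrand
  refine Measurable.ite measurableSet_Ddom (Measurable.mul ?_ hK) measurable_const
  fun_prop

lemma abs_collisionIntegrand_le (hKbd : ∀ a b c, 0 ≤ K a b c ∧ K a b c ≤ Λ)
    (hC : ∀ ω, |f ω| ≤ C) (p : ℝ × ℝ × ℝ) : |collisionIntegrand K f p| ≤ 4 * C * Λ := by
  have hC0 : 0 ≤ C := (abs_nonneg _).trans (hC 0)
  have hΛ0 : 0 ≤ Λ := (hKbd 0 0 0).1.trans (hKbd 0 0 0).2
  unfold collisionIntegrand
  split_ifs
  · have hsum : |f (p.1 + p.2.1 - p.2.2) + f p.2.2 - f p.2.1 - f p.1| ≤ 4 * C := by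
      have := abs_le.1 (hC (p.1 + p.2.1 - p.2.2)); have := abs_le.1 (hC p.2.2)
      have := abs_le.1 (hC p.2.1); have := abs_le.1 (hC p.1)
      exact abs_le.2 ⟨by linarith, by linarith⟩
    rw [abs_mul, abs_of_nonneg (hKbd _ _ _).1]
    exact mul_le_mul hsum (hKbd _ _ _).2 (hKbd _ _ _).1 (by positivity)
  · simp only [abs_zero]; positivity

lemma integrable_collisionIntegrand (hK : Measurable fun p : ℝ × ℝ × ℝ => K p.1 p.2.1 p.2.2)
    (hKbd : ∀ a b c, 0 ≤ K a b c ∧ K a b c ≤ Λ) (hf : Measurable f) (hC : ∀ ω, |f ω| ≤ C)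
    (P : Measure (ℝ × ℝ × ℝ)) [IsFiniteMeasure P] : Integrable (collisionIntegrand K f) P :=
  .of_bound (measurable_collisionIntegrand hK hf).aestronglyMeasurable _
    (Eventually.of_forall (abs_collisionIntegrand_le hKbd hC))

variable {m n : Measure ℝ} [IsProbabilityMeasure m]

lemma abs_Qpair_le (hKbd : ∀ a b c, 0 ≤ K a b c ∧ K a b c ≤ Λ) (hC : ∀ ω, |f ω| ≤ C) :
    |Qpair K m f| ≤ 2 * C * Λ := by
  have h := norm_integral_le_of_norm_le_const (μ := m.prod (m.prod m)) (f := collisionIntegrand K f)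
    (Eventually.of_forall (abs_collisionIntegrand_le hKbd hC))
  rw [probReal_univ, mul_one, Real.norm_eq_abs] at h
  rw [Qpair, abs_mul, abs_of_pos one_half_pos]
  linarith

lemma Qpair_add (hK : Measurable fun p : ℝ × ℝ × ℝ => K p.1 p.2.1 p.2.2)
    (hKbd : ∀ a b c, 0 ≤ K a b c ∧ K a b c ≤ Λ) (hf : Measurable f) (hg : Measurable g)
    {C' : ℝ} (hC : ∀ ω, |f ω| ≤ C) (hC' : ∀ ω, |g ω| ≤ C') :
    Qpair K m (f + g) = Qpair K m f + Qpair K m g := by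
  rw [Qpair, Qpair, Qpair, ← mul_add, ← integral_add (integrable_collisionIntegrand hK hKbd hf hC _)
    (integrable_collisionIntegrand hK hKbd hg hC' _)]
  congr 2 with p
  simp only [collisionIntegrand, Pi.add_apply]
  split_ifs <;> ring

lemma abs_Qpair_sub_le [IsProbabilityMeasure n]
    (hK : Measurable fun p : ℝ × ℝ × ℝ => K p.1 p.2.1 p.2.2)
    (hKbd : ∀ a b c, 0 ≤ K a b c ∧ K a b c ≤ Λ) (hf : Measurable f) (hC : ∀ ω, |f ω| ≤ C) :
    |Qpair K m f - Qpair K n f| ≤ 6 * C * Λ * tvDist m n := by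
  have hC0 : 0 ≤ C := (abs_nonneg _).trans (hC 0)
  have hΛ0 : 0 ≤ Λ := (hKbd 0 0 0).1.trans (hKbd 0 0 0).2
  have h := abs_integral_prod_prod_sub_le (m := m) (n := n)
    (measurable_collisionIntegrand hK hf) (by positivity) (abs_collisionIntegrand_le hKbd hC)
  rw [Qpair, Qpair, ← mul_sub, abs_mul, abs_of_pos one_half_pos]
  linarith

end Collision

lemma aestronglyMeasurable_restrict_Ioc_of_eqOn_Ioi {β : Type*} [TopologicalSpace β]
    [TopologicalSpace.PseudoMetrizableSpace β] {g : ℝ → β} {a T : ℝ} {c : β}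
    (hlt : ∀ q < T, AEStronglyMeasurable g (volume.restrict (Ioc a q)))
    (hgt : EqOn g (fun _ => c) (Ioi T)) (t : ℝ) :
    AEStronglyMeasurable g (volume.restrict (Ioc a t)) := by
  have hcover : Ioc a t ⊆ (⋃ q : {q : ℚ // (q : ℝ) < T}, Ioc a (q : ℝ)) ∪ ({T} ∪ Ioi T) := by
    intro x hx
    rcases lt_trichotomy x T with hxT | rfl | hTx
    · obtain ⟨q, hxq, hqT⟩ := exists_rat_btwn hxT
      exact Or.inl (mem_iUnion.2 ⟨⟨q, hqT⟩, hx.1, hxq.le⟩)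
    · exact Or.inr (Or.inl rfl)
    · exact Or.inr (Or.inr hTx)
  refine AEStronglyMeasurable.mono_set hcover (aestronglyMeasurable_union_iff.2
    ⟨.iUnion fun q => hlt q q.2, aestronglyMeasurable_union_iff.2 ⟨?_, ?_⟩⟩)
  · rw [Measure.restrict_eq_zero.2 Real.volume_singleton]
    exact aestronglyMeasurable_zero_measure g
  · exact aestronglyMeasurable_const.congr
      ((ae_restrict_iff' measurableSet_Ioi).2 (Eventually.of_forall fun s hs => (hgt hs).symm))

lemma eq_zero_of_le_mul_integral {D : ℝ → ℝ} {L : ℝ} (hL : 0 ≤ L)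
    (hD : ContinuousOn D (Ici 0)) (hD0 : ∀ t, 0 ≤ t → 0 ≤ D t)
    (hle : ∀ t, 0 ≤ t → D t ≤ L * ∫ s in Ioc 0 t, D s) {t : ℝ} (ht : 0 ≤ t) : D t = 0 := by
  obtain ⟨B, hB⟩ := isCompact_Icc.bddAbove_image (hD.mono (Icc_subset_Ici_self : Icc 0 t ⊆ Ici 0))
  have hint (s : ℝ) : IntegrableOn D (Ioc 0 s) :=
    ((hD.mono Icc_subset_Ici_self).integrableOn_Icc).mono_set Ioc_subset_Icc_self
  have iterate (k : ℕ) : ∀ s ∈ Icc 0 t, D s ≤ B * (L * s) ^ k / k.factorial := by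
    induction k with
    | zero => exact fun s hs => by simpa using hB (mem_image_of_mem D hs)
    | succ k ih =>
      intro s hs
      have hpoly : ∫ r in Ioc 0 s, B * (L * r) ^ k / k.factorial
          = B * L ^ k / k.factorial * (s ^ (k + 1) / (k + 1)) := by
        rw [← intervalIntegral.integral_of_le hs.1]
        simp_rw [mul_pow, show ∀ r : ℝ, B * (L ^ k * r ^ k) / k.factorial
          = B * L ^ k / k.factorial * r ^ k from fun r => by ring]
        rw [intervalIntegral.integral_const_mul, integral_pow, zero_pow k.succ_ne_zero, sub_zero]
      calc D s ≤ L * ∫ r in Ioc 0 s, D r := hle s hs.1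
        _ ≤ L * ∫ r in Ioc 0 s, B * (L * r) ^ k / k.factorial :=
          mul_le_mul_of_nonneg_left (setIntegral_mono_on (hint s)
            (Continuous.integrableOn_Ioc (by fun_prop)) measurableSet_Ioc
            fun r hr => ih r ⟨hr.1.le, hr.2.trans hs.2⟩) hL
        _ = B * (L * s) ^ (k + 1) / (k + 1).factorial := by
          rw [hpoly, Nat.factorial_succ]; push_cast; field_simp; ring
  have hlim : Tendsto (fun k : ℕ => B * (L * t) ^ k / k.factorial) atTop (nhds 0) := by
    simpa [mul_div_assoc] using (FloorSemiring.tendsto_pow_div_factorial_atTop (L * t)).const_mul B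
  exact le_antisymm (ge_of_tendsto' hlim fun k => iterate k t ⟨ht, le_rfl⟩) (hD0 t ht)

namespace IsWeakSolutionCb

variable {K : ℝ → ℝ → ℝ → ℝ} {Λ : ℝ} {μ₀ : Measure ℝ} {μ ν : ℝ → Measure ℝ}
  {f : ℝ → ℝ} {C : ℝ}

lemma isProbabilityMeasure (hμ : IsWeakSolutionCb K μ₀ μ) {t : ℝ} (ht : 0 ≤ t) :
    IsProbabilityMeasure (μ t) :=
  (hμ.1 t ht).1

-- The Bochner integral in the weak equation is then the junk value `0`.
lemma integral_eq_integral_apply_zero_of_not_integrableOn (hμ : IsWeakSolutionCb K μ₀ μ)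
    (hf : Continuous f) (hC : ∀ ω, |f ω| ≤ C) {t : ℝ} (ht : 0 ≤ t)
    (h : ¬ IntegrableOn (fun s => Qpair K (μ s) f) (Ioc 0 t)) :
    ∫ ω, f ω ∂μ t = ∫ ω, f ω ∂μ 0 := by
  have e := hμ.2 f hf ⟨C, hC⟩ t ht
  have e0 := hμ.2 f hf ⟨C, hC⟩ 0 le_rfl
  rw [integral_undef h, add_zero] at e
  simpa [e0] using e

lemma eq_apply_zero_of_not_integrableOn
    (hK : Measurable fun p : ℝ × ℝ × ℝ => K p.1 p.2.1 p.2.2)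
    (hKbd : ∀ a b c, 0 ≤ K a b c ∧ K a b c ≤ Λ) (hμ : IsWeakSolutionCb K μ₀ μ)
    (hf : Continuous f) (hC : ∀ ω, |f ω| ≤ C) {t : ℝ} (ht : 0 ≤ t)
    (h : ¬ IntegrableOn (fun s => Qpair K (μ s) f) (Ioc 0 t)) : μ t = μ 0 := by
  have := hμ.isProbabilityMeasure ht
  have := hμ.isProbabilityMeasure le_rfl
  refine ext_of_forall_integral_eq_of_IsFiniteMeasure fun g => ?_
  have hg : ∀ ω, |g ω| ≤ ‖g‖ := g.norm_coe_le_norm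
  by_cases hgi : IntegrableOn (fun s => Qpair K (μ s) g) (Ioc 0 t)
  · -- otherwise `f = (g + f) - g` would have an integrable collision term
    have hsum : ¬ IntegrableOn (fun s => Qpair K (μ s) (g + f)) (Ioc 0 t) := fun hs =>
      h <| (hs.sub hgi).congr_fun (fun s hs' => by
        have := hμ.isProbabilityMeasure hs'.1.le
        simp only [Pi.sub_apply, Qpair_add hK hKbd g.continuous.measurable hf.measurable hg hC]
        ring) measurableSet_Ioc
    have e := integral_eq_integral_apply_zero_of_not_integrableOn hμ (g.continuous.add hf)
      (fun ω => (abs_add_le _ _).trans (add_le_add (hg ω) (hC ω))) ht hsum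
    have ef := integral_eq_integral_apply_zero_of_not_integrableOn hμ hf hC ht h
    have hfi (ρ : Measure ℝ) [IsFiniteMeasure ρ] : Integrable f ρ :=
      .of_bound hf.aestronglyMeasurable C (Eventually.of_forall hC)
    simp only [Pi.add_apply] at e
    rw [integral_add (g.integrable _) (hfi _), integral_add (g.integrable _) (hfi _)] at e
    linarith
  · exact integral_eq_integral_apply_zero_of_not_integrableOn hμ g.continuous hg ht hgi

lemma aestronglyMeasurable_Qpair (hK : Measurable fun p : ℝ × ℝ × ℝ => K p.1 p.2.1 p.2.2)
    (hKbd : ∀ a b c, 0 ≤ K a b c ∧ K a b c ≤ Λ) (hμ : IsWeakSolutionCb K μ₀ μ)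
    (hf : Continuous f) (hC : ∀ ω, |f ω| ≤ C) (t : ℝ) :
    AEStronglyMeasurable (fun s => Qpair K (μ s) f) (volume.restrict (Ioc 0 t)) := by
  by_contra hbad
  set Bad := {b : ℝ | ∃ g : ℝ → ℝ, Continuous g ∧ (∃ C, ∀ ω, |g ω| ≤ C) ∧
    ¬ AEStronglyMeasurable (fun s => Qpair K (μ s) g) (volume.restrict (Ioc 0 b))}
  have hpos : ∀ b ∈ Bad, 0 < b := by
    rintro b ⟨g, -, -, hg⟩
    by_contra hb
    rw [Ioc_eq_empty (by linarith), Measure.restrict_empty] at hg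
    exact hg (aestronglyMeasurable_zero_measure _)
  have hne : Bad.Nonempty := ⟨t, f, hf, ⟨C, hC⟩, hbad⟩
  have hfrozen : EqOn (fun s => Qpair K (μ s) f) (fun _ => Qpair K (μ 0) f) (Ioi (sInf Bad)) := by
    intro s hs
    obtain ⟨b, ⟨g, hg, ⟨Cg, hCg⟩, hgb⟩, hbs⟩ := exists_lt_of_csInf_lt hne hs
    have hs0 : 0 ≤ s := (hpos b ⟨g, hg, ⟨Cg, hCg⟩, hgb⟩).le.trans hbs.le
    simp only [hμ.eq_apply_zero_of_not_integrableOn hK hKbd hg hCg hs0 fun hint =>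
      hgb (hint.mono_set (Ioc_subset_Ioc_right hbs.le)).aestronglyMeasurable]
  refine hbad (aestronglyMeasurable_restrict_Ioc_of_eqOn_Ioi (fun q hq => ?_) hfrozen t)
  by_contra hq'
  exact notMem_of_lt_csInf hq ⟨0, fun b hb => (hpos b hb).le⟩ ⟨f, hf, ⟨C, hC⟩, hq'⟩

lemma integrableOn_Qpair (hK : Measurable fun p : ℝ × ℝ × ℝ => K p.1 p.2.1 p.2.2)
    (hKbd : ∀ a b c, 0 ≤ K a b c ∧ K a b c ≤ Λ) (hμ : IsWeakSolutionCb K μ₀ μ)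
    (hf : Continuous f) (hC : ∀ ω, |f ω| ≤ C) (t : ℝ) :
    IntegrableOn (fun s => Qpair K (μ s) f) (Ioc 0 t) := by
  refine Integrable.of_bound (hμ.aestronglyMeasurable_Qpair hK hKbd hf hC t) (2 * C * Λ)
    ((ae_restrict_iff' measurableSet_Ioc).2 (Eventually.of_forall fun s hs => ?_))
  have := hμ.isProbabilityMeasure hs.1.le
  exact (Real.norm_eq_abs _).trans_le (abs_Qpair_le hKbd hC)

lemma integral_sub_integral (hK : Measurable fun p : ℝ × ℝ × ℝ => K p.1 p.2.1 p.2.2)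
    (hKbd : ∀ a b c, 0 ≤ K a b c ∧ K a b c ≤ Λ) (hμ : IsWeakSolutionCb K μ₀ μ)
    (hf : Continuous f) (hC : ∀ ω, |f ω| ≤ C) {s t : ℝ} (hs : 0 ≤ s) (hst : s ≤ t) :
    ∫ ω, f ω ∂μ t - ∫ ω, f ω ∂μ s = ∫ r in Ioc s t, Qpair K (μ r) f := by
  have hint := hμ.integrableOn_Qpair hK hKbd hf hC t
  rw [hμ.2 f hf ⟨C, hC⟩ t (hs.trans hst), hμ.2 f hf ⟨C, hC⟩ s hs,
    ← Ioc_union_Ioc_eq_Ioc hs hst, setIntegral_union (Ioc_disjoint_Ioc_of_le le_rfl)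
      measurableSet_Ioc (hint.mono_set (Ioc_subset_Ioc_right hst))
      (hint.mono_set (Ioc_subset_Ioc_left hs))]
  ring

lemma tvDist_le_mul_sub (hK : Measurable fun p : ℝ × ℝ × ℝ => K p.1 p.2.1 p.2.2)
    (hKbd : ∀ a b c, 0 ≤ K a b c ∧ K a b c ≤ Λ) (hμ : IsWeakSolutionCb K μ₀ μ)
    {s t : ℝ} (hs : 0 ≤ s) (hst : s ≤ t) : tvDist (μ t) (μ s) ≤ 2 * Λ * (t - s) :=
  tvDist_le fun f hf hf1 => by
    rw [hμ.integral_sub_integral hK hKbd hf hf1 hs hst]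
    have h := norm_setIntegral_le_of_norm_le_const (μ := volume)
      (f := fun r => Qpair K (μ r) f) (s := Ioc s t) measure_Ioc_lt_top fun r hr =>
      have := hμ.isProbabilityMeasure (hs.trans hr.1.le)
      (Real.norm_eq_abs _).trans_le (abs_Qpair_le (f := f) hKbd hf1)
    rwa [Real.volume_real_Ioc_of_le hst, mul_one, Real.norm_eq_abs] at h

lemma continuousOn_tvDist (hK : Measurable fun p : ℝ × ℝ × ℝ => K p.1 p.2.1 p.2.2)
    (hKbd : ∀ a b c, 0 ≤ K a b c ∧ K a b c ≤ Λ) (hμ : IsWeakSolutionCb K μ₀ μ)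
    (hν : IsWeakSolutionCb K μ₀ ν) : ContinuousOn (fun t => tvDist (μ t) (ν t)) (Ici 0) := by
  have hΛ0 : 0 ≤ Λ := (hKbd 0 0 0).1.trans (hKbd 0 0 0).2
  refine (LipschitzOnWith.of_dist_le_mul (K := (4 * Λ).toNNReal) ?_).continuousOn
  intro t ht s hs
  rw [Real.coe_toNNReal _ (by positivity), Real.dist_eq, Real.dist_eq]
  wlog hst : s ≤ t generalizing s t
  · rw [abs_sub_comm, abs_sub_comm t]; exact this s hs t ht (le_of_not_ge hst)
  have := hμ.isProbabilityMeasure ht; have := hν.isProbabilityMeasure ht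
  have := hμ.isProbabilityMeasure hs; have := hν.isProbabilityMeasure hs
  calc |tvDist (μ t) (ν t) - tvDist (μ s) (ν s)| ≤ tvDist (μ t) (μ s) + tvDist (ν t) (ν s) :=
        abs_tvDist_sub_tvDist_le
    _ ≤ 2 * Λ * (t - s) + 2 * Λ * (t - s) := add_le_add
        (hμ.tvDist_le_mul_sub hK hKbd hs hst) (hν.tvDist_le_mul_sub hK hKbd hs hst)
    _ = 4 * Λ * |t - s| := by rw [abs_of_nonneg (sub_nonneg.2 hst)]; ring

lemma tvDist_le_mul_integral (hK : Measurable fun p : ℝ × ℝ × ℝ => K p.1 p.2.1 p.2.2)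
    (hKbd : ∀ a b c, 0 ≤ K a b c ∧ K a b c ≤ Λ) (hμ : IsWeakSolutionCb K μ₀ μ)
    (hν : IsWeakSolutionCb K μ₀ ν) {t : ℝ} (ht : 0 ≤ t) :
    tvDist (μ t) (ν t) ≤ 6 * Λ * ∫ s in Ioc 0 t, tvDist (μ s) (ν s) := by
  refine tvDist_le fun f hf hf1 => ?_
  have hiμ := hμ.integrableOn_Qpair hK hKbd hf hf1 t
  have hiν := hν.integrableOn_Qpair hK hKbd hf hf1 t
  have hD : IntegrableOn (fun s => tvDist (μ s) (ν s)) (Ioc 0 t) :=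
    ((hμ.continuousOn_tvDist hK hKbd hν).mono (Icc_subset_Ici_self : Icc 0 t ⊆ Ici 0)
      |>.integrableOn_Icc).mono_set Ioc_subset_Icc_self
  calc |∫ ω, f ω ∂μ t - ∫ ω, f ω ∂ν t|
      = |∫ s in Ioc 0 t, (Qpair K (μ s) f - Qpair K (ν s) f)| := by
        rw [hμ.2 f hf ⟨1, hf1⟩ t ht, hν.2 f hf ⟨1, hf1⟩ t ht, integral_sub hiμ hiν]; ring_nf
    _ ≤ ∫ s in Ioc 0 t, |Qpair K (μ s) f - Qpair K (ν s) f| := abs_integral_le_integral_abs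
    _ ≤ ∫ s in Ioc 0 t, 6 * Λ * tvDist (μ s) (ν s) := by
        refine setIntegral_mono_on (hiμ.sub hiν).abs (hD.const_mul _) measurableSet_Ioc
          fun s hs => ?_
        have := hμ.isProbabilityMeasure hs.1.le; have := hν.isProbabilityMeasure hs.1.le
        simpa using abs_Qpair_sub_le hK hKbd hf.measurable hf1
    _ = 6 * Λ * ∫ s in Ioc 0 t, tvDist (μ s) (ν s) := integral_const_mul _ _

end IsWeakSolutionCb

theorem uniqueness_bounded_kernel_general
    (K : ℝ → ℝ → ℝ → ℝ)
    (hKmeas : Measurable fun p : ℝ × ℝ × ℝ => K p.1 p.2.1 p.2.2)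
    (Λ : ℝ) (hKbd : ∀ ω₁ ω₂ ω₃ : ℝ, 0 ≤ K ω₁ ω₂ ω₃ ∧ K ω₁ ω₂ ω₃ ≤ Λ)
    (μ₀ : Measure ℝ)
    (μ ν : ℝ → Measure ℝ)
    (hμ : IsWeakSolutionCb K μ₀ μ) (hν : IsWeakSolutionCb K μ₀ ν) :
    ∀ t, 0 ≤ t → μ t = ν t := by
  intro t ht
  have hΛ0 : 0 ≤ Λ := (hKbd 0 0 0).1.trans (hKbd 0 0 0).2
  have hnonneg : ∀ s, 0 ≤ s → 0 ≤ tvDist (μ s) (ν s) := fun s hs =>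
    have := hμ.isProbabilityMeasure hs
    have := hν.isProbabilityMeasure hs
    tvDist_nonneg
  have := hμ.isProbabilityMeasure ht
  have := hν.isProbabilityMeasure ht
  exact eq_of_tvDist_eq_zero <| eq_zero_of_le_mul_integral (by positivity : 0 ≤ 6 * Λ)
    (hμ.continuousOn_tvDist hKmeas hKbd hν) hnonneg
    (fun s hs => hμ.tvDist_le_mul_integral hKmeas hKbd hν hs) ht

/-- Uniqueness of solutions for a bounded kernel: two families of
probability measures solving the weak isotropic 4-wave kinetic equation with the same
initial datum coincide. -/
theorem uniqueness_bounded_kernel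
    (K : ℝ → ℝ → ℝ → ℝ)
    (hKmeas : Measurable fun p : ℝ × ℝ × ℝ => K p.1 p.2.1 p.2.2)
    (hKsymm : ∀ ω₁ ω₂ ω₃ : ℝ, K ω₁ ω₂ ω₃ = K ω₂ ω₁ ω₃)
    (Λ : ℝ) (hKbd : ∀ ω₁ ω₂ ω₃ : ℝ, 0 ≤ K ω₁ ω₂ ω₃ ∧ K ω₁ ω₂ ω₃ ≤ Λ)
    (μ₀ : Measure ℝ) [IsProbabilityMeasure μ₀] (hsupp₀ : μ₀ (Set.Iio 0) = 0)
    (μ ν : ℝ → Measure ℝ)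
    (hμ : IsWeakSolutionCb K μ₀ μ) (hν : IsWeakSolutionCb K μ₀ ν) :
    ∀ t, 0 ≤ t → μ t = ν t :=
  uniqueness_bounded_kernel_general K hKmeas Λ hKbd μ₀ μ ν hμ hν
end
end

section
/- For every A ∈ ℝ and every ξ > 0, the wave numbers k₁ = −A²ξ², k₂ = A²(1+ξ+ξ²)², k₃ = A²(1+ξ)², k = A²ξ²(1+ξ)² satisfy the 4-wave resonance conditions for the dispersion relation ω(k) = |k|^{1/2}: namely k₁ + k₂ = k₃ + k and |k₁|^{1/2} + |k₂|^{1/2} = |k₃|^{1/2} + |k|^{1/2}. -/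
/-- The two-parameter family of wave numbers
`k₁ = −A²ξ², k₂ = A²(1+ξ+ξ²)², k₃ = A²(1+ξ)², k = A²ξ²(1+ξ)²` satisfies the 4-wave
resonance conditions for the dispersion relation `ω(k) = |k|^{1/2}`. -/
theorem mmt_resonance_parametrization (A ξ : ℝ) (hξ : 0 < ξ) :
    (-A ^ 2 * ξ ^ 2) + A ^ 2 * (1 + ξ + ξ ^ 2) ^ 2 =
      A ^ 2 * (1 + ξ) ^ 2 + A ^ 2 * ξ ^ 2 * (1 + ξ) ^ 2 ∧
    Real.sqrt |(-A ^ 2 * ξ ^ 2)| + Real.sqrt |A ^ 2 * (1 + ξ + ξ ^ 2) ^ 2| =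
      Real.sqrt |A ^ 2 * (1 + ξ) ^ 2| + Real.sqrt |A ^ 2 * ξ ^ 2 * (1 + ξ) ^ 2| := by
  refine ⟨by ring, ?_⟩
  rw [show -A ^ 2 * ξ ^ 2 = -((A * ξ) ^ 2) by ring,
      show A ^ 2 * (1 + ξ + ξ ^ 2) ^ 2 = (A * (1 + ξ + ξ ^ 2)) ^ 2 by ring,
      show A ^ 2 * (1 + ξ) ^ 2 = (A * (1 + ξ)) ^ 2 by ring,
      show A ^ 2 * ξ ^ 2 * (1 + ξ) ^ 2 = (A * (ξ * (1 + ξ))) ^ 2 by ring,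
      abs_neg, abs_of_nonneg (sq_nonneg _), abs_of_nonneg (sq_nonneg _),
      abs_of_nonneg (sq_nonneg _), abs_of_nonneg (sq_nonneg _),
      Real.sqrt_sq_eq_abs, Real.sqrt_sq_eq_abs, Real.sqrt_sq_eq_abs, Real.sqrt_sq_eq_abs,
      abs_mul, abs_mul, abs_mul, abs_mul]
  have h1 : (0:ℝ) < 1 + ξ := by linarith
  have h2 : (0:ℝ) < 1 + ξ + ξ ^ 2 := by positivity
  rw [abs_of_pos hξ, abs_of_pos h1, abs_of_pos h2, abs_of_pos (mul_pos hξ h1)]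
  ring
end
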